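/- Alternation lemma: Let G and H be qf-stable groups and let w(x̄, ȳ) = u_1(x̄^{ε_1}, ȳ^{ε_1}) ⋯ u_ℓ(x̄^{ε_ℓ}, ȳ^{ε_ℓ}) be a group word whose variables are separated into G-variables and H-variables, with the ε_k alternating between G and H. Then there exists n (depending only on this decomposition of w) bounding the set of m for which there exist tuples ā_i = (ā_i^G, ā_i^H) and b̄_j = (b̄_j^G, b̄_j^H), 1 ≤ i,j ≤ m, with ā_i^G, b̄_j^G tuples from G and ā_i^H, b̄_j^H tuples from H, such that w(ā_i, b̄_j) = 1 in G ∗ H iff i ≤ j. -/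

import Mathlib

open Monoid

/-- A group `G` is qf-stable if every group-word equation `w(x̄, ȳ) = 1` defines a
stable relation on tuples from `G`. -/
def QFStable (G : Type*) [Group G] : Prop :=
  ∀ (p q : ℕ) (w : FreeGroup (Fin p ⊕ Fin q)), ∃ n : ℕ, ∀ m : ℕ,
    (∃ (a : Fin m → Fin p → G) (b : Fin m → Fin q → G),
      ∀ i j, FreeGroup.lift (Sum.elim (a i) (b j)) w = 1 ↔ i ≤ j) → m ≤ n

/-!
In `G ∗ H` a product of syllables that alternate between the two factors and are all
nontrivial is itself nontrivial (normal form). Hence, once adjacent syllables from the same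
factor are merged, `w(ā, b̄) = 1` holds iff some syllable is trivial and the word with that
syllable deleted evaluates to `1`. Unfolding this recursion writes `w(ā, b̄) = 1` as a finite
disjunction of finite conjunctions of equations in `G` or in `H`, of a shape independent of the
parameters. Stable relations are closed under negation and, by Ramsey's theorem for pairs, under
finite disjunctions, hence also under finite conjunctions.
-/

open Finset in
theorem Finset.exists_preHomogeneous {α β : Type*} [Fintype α] [LinearOrder β]
    (c : β → β → α) (K : ℕ) (s : Finset β) (hs : (Fintype.card α + 1) ^ K ≤ #s) :
    ∃ (f : Fin K → β) (e : Fin K → α), (∀ p, f p ∈ s) ∧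
      ∀ p q, p < q → f p < f q ∧ c (f p) (f q) = e p := by
  classical
  induction K generalizing s with
  | zero => exact ⟨Fin.elim0, Fin.elim0, fun p => p.elim0, fun p => p.elim0⟩
  | succ K ih =>
    have hne : s.Nonempty := card_pos.1 (lt_of_lt_of_le (by positivity) hs)
    set a := s.min' hne
    have : Nonempty α := ⟨c a a⟩
    have hfiber : Fintype.card α * (Fintype.card α + 1) ^ K ≤ #(s.erase a) := by
      rw [card_erase_of_mem (s.min'_mem hne)]
      rw [pow_succ, mul_add_one, mul_comm] at hs
      have : 1 ≤ (Fintype.card α + 1) ^ K := Nat.one_le_pow _ _ (by omega)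
      omega
    obtain ⟨b, -, hb⟩ := exists_le_card_fiber_of_mul_le_card_of_maps_to
      (fun x _ => mem_univ (c a x)) univ_nonempty (by rwa [card_univ])
    obtain ⟨f, e, hfs, hfe⟩ := ih _ hb
    refine ⟨Fin.cons a f, Fin.cons b e, fun p => ?_, ?_⟩
    · induction p using Fin.cases with
      | zero => exact s.min'_mem hne
      | succ p => simpa using mem_of_mem_erase (mem_filter.1 (hfs p)).1
    · intro p q hpq
      induction q using Fin.cases with
      | zero => exact absurd hpq (Fin.not_lt_zero p)
      | succ q =>
        induction p using Fin.cases with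
        | zero =>
          obtain ⟨hq, hcq⟩ := mem_filter.1 (hfs q)
          obtain ⟨hqa, hqs⟩ := mem_erase.1 hq
          exact ⟨lt_of_le_of_ne (s.min'_le _ hqs) (Ne.symm hqa), hcq⟩
        | succ p => simpa using hfe p q (Fin.succ_lt_succ_iff.1 hpq)

theorem exists_strictMono_homogeneous {α β : Type*} [Fintype α] [Fintype β] [LinearOrder β]
    (c : β → β → α) (k : ℕ)
    (hβ : (Fintype.card α + 1) ^ (Fintype.card α * k + 1) ≤ Fintype.card β) :
    ∃ (f : Fin k → β) (d : α), StrictMono f ∧ ∀ p q, p < q → c (f p) (f q) = d := by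
  classical
  obtain ⟨f, e, -, hfe⟩ := Finset.univ.exists_preHomogeneous c _ hβ
  obtain ⟨d, hd⟩ := Fintype.exists_lt_card_fiber_of_mul_lt_card e (n := k) (by simp)
  obtain ⟨t, hte, htk⟩ := Finset.exists_subset_card_eq hd.le
  have hcol (p : Fin k) : e (t.orderEmbOfFin htk p) = d :=
    (Finset.mem_filter.1 (hte (t.orderEmbOfFin_mem htk p))).2
  refine ⟨f ∘ t.orderEmbOfFin htk, d, fun p q hpq => ?_, fun p q hpq => ?_⟩
  · exact (hfe _ _ ((t.orderEmbOfFin htk).strictMono hpq)).1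
  · exact (hfe _ _ ((t.orderEmbOfFin htk).strictMono hpq)).2.trans (hcol p)

section Stability

variable {X Y X' Y' ι : Type*}

def HasLadder (R : X → Y → Prop) (m : ℕ) : Prop :=
  ∃ (a : Fin m → X) (b : Fin m → Y), ∀ i j, R (a i) (b j) ↔ i ≤ j

def IsStableRel (R : X → Y → Prop) : Prop :=
  ∃ n, ∀ m, HasLadder R m → m ≤ n

theorem QFStable.isStableRel {G : Type*} [Group G] (h : QFStable G) (p q : ℕ)
    (w : FreeGroup (Fin p ⊕ Fin q)) :
    IsStableRel fun (a : Fin p → G) (b : Fin q → G) => FreeGroup.lift (Sum.elim a b) w = 1 :=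
  h p q w

-- `a` is read at even and `b` at odd positions, so the diagonal, where nothing is known, is
-- never used.
theorem hasLadder_of_lt_of_gt {R : X → Y → Prop} {n : ℕ} (a : Fin (2 * n) → X)
    (b : Fin (2 * n) → Y) (hlt : ∀ i j, i < j → R (a i) (b j))
    (hgt : ∀ i j, j < i → ¬R (a i) (b j)) : HasLadder R n := by
  refine ⟨fun r => a ⟨2 * r, by omega⟩, fun s => b ⟨2 * s + 1, by omega⟩, fun r s => ?_⟩
  constructor
  · intro hR
    by_contra! hsr
    exact hgt _ _ (Fin.mk_lt_mk.2 (by omega)) hR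
  · intro hrs
    exact hlt _ _ (Fin.mk_lt_mk.2 (by omega))

namespace IsStableRel

variable {R : X → Y → Prop}

theorem comp (h : IsStableRel R) (f : X' → X) (g : Y' → Y) :
    IsStableRel fun x y => R (f x) (g y) :=
  let ⟨n, hn⟩ := h
  ⟨n, fun m ⟨a, b, hab⟩ => hn m ⟨f ∘ a, g ∘ b, hab⟩⟩

protected theorem not (h : IsStableRel R) : IsStableRel fun x y => ¬R x y := by
  obtain ⟨n, hn⟩ := h
  refine ⟨n + 1, fun m ⟨a, b, hab⟩ => ?_⟩
  cases m with
  | zero => omega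
  | succ m =>
    -- `R (a i) (b j) ↔ j < i`: shift by one and reverse the order
    refine Nat.succ_le_succ (hn m ⟨fun r => a r.rev.succ, fun s => b s.rev.castSucc,
      fun r s => ?_⟩)
    rw [← not_iff_not, show ¬R _ _ ↔ _ from hab _ _, Fin.succ_le_castSucc_iff,
      Fin.rev_lt_rev, not_le]

theorem iExists [Finite ι] {R : ι → X → Y → Prop} (h : ∀ t, IsStableRel (R t)) :
    IsStableRel fun x y => ∃ t, R t x y := by
  rcases isEmpty_or_nonempty ι with _ | _
  · refine ⟨0, fun m ⟨a, b, hab⟩ => ?_⟩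
    by_contra! hm
    obtain ⟨t, -⟩ := (hab ⟨0, hm⟩ ⟨0, hm⟩).2 le_rfl
    exact isEmptyElim t
  have := Fintype.ofFinite ι
  choose n hn using h
  obtain ⟨N, hN⟩ := Finite.bddAbove_range n
  refine ⟨(Fintype.card ι + 1) ^ (Fintype.card ι * (2 * (N + 1)) + 1),
    fun m ⟨a, b, hab⟩ => ?_⟩
  by_contra! hm
  -- colour each pair `i < j` by a disjunct that holds at `(a i, b j)`
  obtain ⟨f, t, hf, hft⟩ := exists_strictMono_homogeneous
    (fun i j => Classical.epsilon fun t => R t (a i) (b j)) (2 * (N + 1))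
    (by simpa using hm.le)
  have hladder : HasLadder (R t) (N + 1) := by
    refine hasLadder_of_lt_of_gt (a ∘ f) (b ∘ f) (fun p q hpq => ?_) (fun p q hqp hR => ?_)
    · exact hft p q hpq ▸ Classical.epsilon_spec ((hab _ _).2 (hf hpq).le)
    · exact not_le.2 (hf hqp) ((hab _ _).1 ⟨t, hR⟩)
  have := hN ⟨t, rfl⟩
  have := hn t _ hladder
  omega

theorem iForall [Finite ι] {R : ι → X → Y → Prop} (h : ∀ t, IsStableRel (R t)) :
    IsStableRel fun x y => ∀ t, R t x y := by
  simpa only [not_exists, not_not] using (iExists fun t => (h t).not).not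

end IsStableRel

end Stability

def List.IsAlternating {A B : Type*} (L : List (A ⊕ B)) : Prop :=
  L.IsChain fun x y => x.isLeft ≠ y.isLeft

theorem List.IsAlternating.map {A B A' B' : Type*} {L : List (A ⊕ B)} (h : L.IsAlternating)
    (f : A → A') (g : B → B') : (L.map (Sum.map f g)).IsAlternating :=
  (List.isChain_map _).2 (h.imp fun x y hxy => by simpa using hxy)

universe u v

namespace Monoid.Coprod

variable {G : Type u} {H : Type v} [Monoid G] [Monoid H]

def ofSum : G ⊕ H → Coprod G H := Sum.elim inl inr

-- Mathlib's normal form for free products is stated for `CoprodI`; to use it, `G` and `H` are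
-- lifted to a common universe and indexed by `Bool`.
abbrev boolFamily (G : Type u) (H : Type v) (b : Bool) : Type (max u v) :=
  cond b (ULift.{v} G) (ULift.{u} H)

instance : ∀ b, Monoid (boolFamily G H b)
  | true => ULift.monoid
  | false => ULift.monoid

def toCoprodI : Coprod G H →* CoprodI (boolFamily G H) :=
  lift ((CoprodI.of (i := true)).comp MulEquiv.ulift.symm.toMonoidHom)
    ((CoprodI.of (i := false)).comp MulEquiv.ulift.symm.toMonoidHom)

def sigmaOfSum : G ⊕ H → Σ b, boolFamily G H b :=
  Sum.elim (fun g => ⟨true, ULift.up g⟩) (fun h => ⟨false, ULift.up h⟩)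

theorem toCoprodI_ofSum (x : G ⊕ H) : toCoprodI (ofSum x) = CoprodI.of (sigmaOfSum x).2 := by
  cases x <;> rfl

theorem sigmaOfSum_snd_ne_one {x : G ⊕ H} (hx : ofSum x ≠ 1) : (sigmaOfSum x).2 ≠ 1 := by
  cases x with
  | inl g => exact fun h => hx (by simp [ofSum, show g = 1 from congrArg ULift.down h])
  | inr g => exact fun h => hx (by simp [ofSum, show g = 1 from congrArg ULift.down h])

theorem prod_map_ofSum_ne_one {L : List (G ⊕ H)} (hL : L ≠ []) (halt : L.IsAlternating)
    (hne : ∀ x ∈ L, ofSum x ≠ 1) : (L.map ofSum).prod ≠ 1 := by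
  classical
  intro hprod
  let w : CoprodI.Word (boolFamily G H) :=
    { toList := L.map sigmaOfSum
      ne_one := by
        simp only [List.mem_map]
        rintro _ ⟨x, hx, rfl⟩
        exact sigmaOfSum_snd_ne_one (hne x hx)
      chain_ne := by
        rw [List.isChain_map]
        refine halt.imp fun x y hxy => ?_
        cases x <;> cases y <;> simp_all [sigmaOfSum] }
  have hw : w.prod = 1 := by
    rw [← map_one toCoprodI, ← hprod, map_list_prod, List.map_map]
    simp only [CoprodI.Word.prod, w, List.map_map]
    exact congrArg _ (List.map_congr_left fun x _ => (toCoprodI_ofSum x).symm)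
  -- `Word.prod` is injective, being the inverse of `Word.equiv`
  have hempty : w = .empty :=
    CoprodI.Word.equiv.symm.injective (hw.trans CoprodI.Word.prod_empty.symm)
  exact hL (List.map_eq_nil_iff.1 (congrArg CoprodI.Word.toList hempty))

end Monoid.Coprod

namespace Syllable

variable {A B G H : Type*}

section Merge

variable [Mul A] [Mul B]

-- `merge x y` is only meaningful when `x` and `y` lie on the same side.
def merge : A ⊕ B → A ⊕ B → A ⊕ B
  | .inl u, .inl v => .inl (u * v)
  | .inr u, .inr v => .inr (u * v)
  | x, _ => x

@[simp]
theorem isLeft_merge (x y : A ⊕ B) : (merge x y).isLeft = x.isLeft := by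
  cases x <;> cases y <;> rfl

def reduce : List (A ⊕ B) → List (A ⊕ B)
  | [] => []
  | x :: L =>
    match reduce L with
    | [] => [x]
    | y :: L' => if x.isLeft = y.isLeft then merge x y :: L' else x :: y :: L'

theorem length_reduce_le (L : List (A ⊕ B)) : (reduce L).length ≤ L.length := by
  induction L with
  | nil => rfl
  | cons x L ih =>
    simp only [reduce]
    split
    · simp
    · rename_i y L' hL
      rw [hL] at ih
      split_ifs <;> simp only [List.length_cons] at ih ⊢ <;> omega

theorem isAlternating_reduce (L : List (A ⊕ B)) : (reduce L).IsAlternating := by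
  induction L with
  | nil => exact List.isChain_nil
  | cons x L ih =>
    simp only [reduce]
    split
    · exact List.isChain_singleton x
    · rename_i y L' hL
      rw [hL] at ih
      split_ifs with hxy
      · obtain ⟨hy, hL'⟩ := List.isChain_cons.1 ih
        exact List.isChain_cons.2 ⟨by simpa [hxy] using hy, hL'⟩
      · exact List.IsChain.cons_cons hxy ih

end Merge

def patterns [Mul A] [Mul B] (L : List (A ⊕ B)) : List (List (A ⊕ B)) :=
  if reduce L = [] then [[]] else
    (List.finRange (reduce L).length).flatMap fun k : Fin (reduce L).length =>
      (patterns ((reduce L).eraseIdx k)).map ((reduce L)[k] :: ·)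
termination_by L.length
decreasing_by
  rw [List.length_eraseIdx_of_lt k.isLt]
  have := length_reduce_le L
  have := k.isLt
  omega

section Eval

variable [Monoid A] [Monoid B] [Monoid G] [Monoid H]

def eval (φ : A →* G) (ψ : B →* H) (x : A ⊕ B) : Coprod G H :=
  Coprod.ofSum (Sum.map φ ψ x)

@[simp] theorem eval_inl (φ : A →* G) (ψ : B →* H) (u : A) :
    eval φ ψ (.inl u) = Coprod.inl (φ u) := rfl

@[simp] theorem eval_inr (φ : A →* G) (ψ : B →* H) (v : B) :
    eval φ ψ (.inr v) = Coprod.inr (ψ v) := rfl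

theorem eval_merge (φ : A →* G) (ψ : B →* H) {x y : A ⊕ B} (h : x.isLeft = y.isLeft) :
    eval φ ψ (merge x y) = eval φ ψ x * eval φ ψ y := by
  cases x <;> cases y <;> simp_all [merge]

theorem prod_map_eval_reduce (φ : A →* G) (ψ : B →* H) (L : List (A ⊕ B)) :
    ((reduce L).map (eval φ ψ)).prod = (L.map (eval φ ψ)).prod := by
  induction L with
  | nil => rfl
  | cons x L ih =>
    simp only [reduce]
    split
    · rename_i hL
      simp [← ih, hL]
    · rename_i y L' hL
      rw [hL] at ih
      split_ifs with hxy
      · simp [← ih, eval_merge φ ψ hxy, mul_assoc]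
      · simp [← ih]

theorem prod_map_eval_eq_one_iff (φ : A →* G) (ψ : B →* H) (L : List (A ⊕ B)) :
    (L.map (eval φ ψ)).prod = 1 ↔ ∃ P ∈ patterns L, ∀ x ∈ P, eval φ ψ x = 1 := by
  induction L using patterns.induct with
  | case1 L hL => simp [patterns, hL, ← prod_map_eval_reduce φ ψ L]
  | case2 L hL ih =>
    rw [patterns, if_neg hL, ← prod_map_eval_reduce]
    simp only [List.mem_flatMap, List.mem_finRange, true_and, List.mem_map]
    have herase (k : Fin (reduce L).length) (hk : eval φ ψ (reduce L)[(k : ℕ)] = 1) :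
        (((reduce L).eraseIdx k).map (eval φ ψ)).prod = ((reduce L).map (eval φ ψ)).prod := by
      simpa [hk, List.eraseIdx_map] using List.mul_prod_eraseIdx
        (l := (reduce L).map (eval φ ψ)) (i := k) (by simp) (fun _ _ => by simp [hk])
    constructor
    · intro h
      obtain ⟨k, hk⟩ : ∃ k : Fin (reduce L).length, eval φ ψ (reduce L)[k] = 1 := by
        by_contra! hne
        refine Coprod.prod_map_ofSum_ne_one (by simpa using hL)
          ((isAlternating_reduce L).map φ ψ) ?_ ?_
        · simp only [List.mem_map, forall_exists_index, and_imp, forall_apply_eq_imp_iff₂]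
          intro x hx
          obtain ⟨k, hk, rfl⟩ := List.getElem_of_mem hx
          exact hne ⟨k, hk⟩
        · rwa [List.map_map]
      obtain ⟨P, hP, hPtriv⟩ := (ih k).1 ((herase k hk).trans h)
      exact ⟨_, ⟨k, P, hP, rfl⟩, List.forall_mem_cons.2 ⟨hk, hPtriv⟩⟩
    · rintro ⟨_, ⟨k, P, hP, rfl⟩, hall⟩
      rw [List.forall_mem_cons] at hall
      rw [← herase k hall.1]
      exact (ih k).2 ⟨P, hP, hall.2⟩

theorem isStableRel_prod_map_eval_eq_one {X Y : Type*} (φ : X → Y → A →* G)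
    (ψ : X → Y → B →* H) (hφ : ∀ u, IsStableRel fun x y => φ x y u = 1)
    (hψ : ∀ v, IsStableRel fun x y => ψ x y v = 1) (L : List (A ⊕ B)) :
    IsStableRel fun x y => (L.map (eval (φ x y) (ψ x y))).prod = 1 := by
  classical
  have hsyllable (z : A ⊕ B) : IsStableRel fun x y => eval (φ x y) (ψ x y) z = 1 := by
    cases z with
    | inl u => simpa [map_eq_one_iff _ Coprod.inl_injective] using hφ u
    | inr v => simpa [map_eq_one_iff _ Coprod.inr_injective] using hψ v
  simpa only [prod_map_eval_eq_one_iff, Subtype.exists, Subtype.forall, exists_prop] using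
    IsStableRel.iExists fun P : {P // P ∈ patterns L} =>
      IsStableRel.iForall fun z : {z // z ∈ P.1} => hsyllable z

end Eval

end Syllable

/-- **Alternation lemma.** Let `G`, `H` be qf-stable groups and let
`w = u_1 ⋯ u_ℓ` be a group word whose variables are separated into `G`-variables
(`x̄^G` of length `pG`, `ȳ^G` of length `qG`) and `H`-variables (`x̄^H` of length
`pH`, `ȳ^H` of length `qH`), each subword `u_k` involving only the variables of the
sort `ε_k`, with the sorts `ε_k` alternating between `G` and `H` (`ε k = true`
meaning sort `G`). Then there exists `n` (depending only on this decomposition of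
`w`) bounding the `m` for which there exist tuples
`ā_i = (ā_i^G, ā_i^H)`, `b̄_j = (b̄_j^G, b̄_j^H)` with `ā_i^G, b̄_j^G` from `G` and
`ā_i^H, b̄_j^H` from `H` such that `w(ā_i, b̄_j) = 1` in `G ∗ H` iff `i ≤ j`. -/
theorem alternation_lemma {G H : Type*} [Group G] [Group H]
    (hG : QFStable G) (hH : QFStable H)
    (pG pH qG qH ℓ : ℕ) (ε : Fin ℓ → Bool)
    (uG : Fin ℓ → FreeGroup (Fin pG ⊕ Fin qG))
    (uH : Fin ℓ → FreeGroup (Fin pH ⊕ Fin qH)) :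
    ∃ n : ℕ, ∀ m : ℕ,
      (∃ (aG : Fin m → Fin pG → G) (aH : Fin m → Fin pH → H)
        (bG : Fin m → Fin qG → G) (bH : Fin m → Fin qH → H),
        ∀ i j,
          (List.ofFn (fun k : Fin ℓ =>
            if ε k then
              Coprod.inl (FreeGroup.lift (Sum.elim (aG i) (bG j)) (uG k))
            else
              (Coprod.inr (FreeGroup.lift (Sum.elim (aH i) (bH j)) (uH k)) :
                Coprod G H))).prod = 1 ↔ i ≤ j) → m ≤ n := by
  obtain ⟨n, hn⟩ := Syllable.isStableRel_prod_map_eval_eq_one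
    (fun (x : (Fin pG → G) × (Fin pH → H)) (y : (Fin qG → G) × (Fin qH → H)) =>
      FreeGroup.lift (Sum.elim x.1 y.1))
    (fun x y => FreeGroup.lift (Sum.elim x.2 y.2))
    (fun u => (hG.isStableRel pG qG u).comp Prod.fst Prod.fst)
    (fun v => (hH.isStableRel pH qH v).comp Prod.snd Prod.snd)
    (List.ofFn fun k => if ε k then .inl (uG k) else .inr (uH k))
  refine ⟨n, fun m ⟨aG, aH, bG, bH, h⟩ =>
    hn m ⟨fun i => (aG i, aH i), fun j => (bG j, bH j), fun i j => ?_⟩⟩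
  refine (iff_of_eq (congrArg (· = 1) ?_)).trans (h i j)
  rw [List.map_ofFn]
  refine congrArg (List.ofFn · |>.prod) (funext fun k => ?_)
  dsimp only [Function.comp_apply]
  cases ε k <;> rfl
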